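/- Liquid association equals the triple moment under normality: Let (Ω, F, P) be a probability space and X, Y, Z real random variables such that the law of Z is the standard Gaussian N(0,1), the product X·Y is integrable, and X·Y·Z is integrable. Suppose g : ℝ → ℝ is a measurable, differentiable function such that g∘Z is a version of the conditional expectation E[X·Y | σ(Z)], with g'∘Z integrable and z ↦ z·g(z) integrable with respect to the law of Z. Then E[g'(Z)] = E[X·Y·Z]. -/

import Mathlib

/-!
Two facts combine. By the pull-out property of conditional expectation,
`E[XYZ] = E[Z · E[XY | σ(Z)]] = E[Z g(Z)]`. By Stein's identity for `Z ~ N(0,1)`,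
`E[g'(Z)] = E[Z g(Z)]`: with `φ` the Gaussian density, `φ' = -z φ`, so `g' φ - z g φ` is the
derivative of `g φ`, and its integral over `ℝ` vanishes because `g φ` is integrable.
-/

open MeasureTheory ProbabilityTheory Real
open scoped NNReal

lemma Continuous.integrable_of_integrable_sub_mul {f : ℝ → ℝ} (c : ℝ) (hf : Continuous f)
    (hcf : Integrable (fun x => (x - c) * f x)) : Integrable f := by
  have hnear : IntegrableOn f (Metric.closedBall c 1) :=
    hf.continuousOn.integrableOn_compact (isCompact_closedBall c 1)
  have hfar : IntegrableOn f (Metric.closedBall c 1)ᶜ := by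
    refine hcf.norm.integrableOn.mono' hf.aestronglyMeasurable.restrict
      (ae_restrict_of_forall_mem measurableSet_closedBall.compl fun x hx => ?_)
    have hone : 1 ≤ |x - c| := by
      rw [Set.mem_compl_iff, Metric.mem_closedBall, not_le, Real.dist_eq] at hx
      exact hx.le
    rw [norm_mul, Real.norm_eq_abs (x - c)]
    exact le_mul_of_one_le_left (norm_nonneg _) hone
  simpa using hnear.union hfar

namespace ProbabilityTheory

lemma hasDerivAt_gaussianPDFReal (μ : ℝ) (v : ℝ≥0) (x : ℝ) :
    HasDerivAt (gaussianPDFReal μ v) (-((x - μ) / v) * gaussianPDFReal μ v x) x := by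
  have hexponent : HasDerivAt (fun y => -(y - μ) ^ 2 / (2 * v)) (-((x - μ) / v)) x :=
    ((((hasDerivAt_id x).sub_const μ).pow 2).neg.div_const (2 * (v : ℝ))).congr_deriv
      (by simp only [id]; ring)
  exact (hexponent.exp.const_mul (√(2 * π * v))⁻¹).congr_deriv (by rw [gaussianPDFReal]; ring)

lemma integrable_gaussianReal_iff {μ : ℝ} {v : ℝ≥0} (hv : v ≠ 0) {f : ℝ → ℝ} :
    Integrable f (gaussianReal μ v) ↔ Integrable (fun x => gaussianPDFReal μ v x * f x) := by
  rw [gaussianReal_of_var_ne_zero μ hv, integrable_withDensity_iff_integrable_smul'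
    (measurable_gaussianPDF μ v) (ae_of_all _ fun _ => gaussianPDF_lt_top)]
  simp only [toReal_gaussianPDF, smul_eq_mul]

theorem var_mul_integral_deriv_gaussianReal {μ : ℝ} {v : ℝ≥0} (hv : v ≠ 0) {g : ℝ → ℝ}
    (hg : Differentiable ℝ g) (hg' : Integrable (deriv g) (gaussianReal μ v))
    (hcg : Integrable (fun x => (x - μ) * g x) (gaussianReal μ v)) :
    v * ∫ x, deriv g x ∂gaussianReal μ v = ∫ x, (x - μ) * g x ∂gaussianReal μ v := by
  set φ := gaussianPDFReal μ v
  rw [integrable_gaussianReal_iff hv] at hg' hcg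
  have hderiv : ∀ x, HasDerivAt (fun x => v * (g x * φ x))
      (v * (φ x * deriv g x) - φ x * ((x - μ) * g x)) x := fun x =>
    (((hg x).hasDerivAt.mul (hasDerivAt_gaussianPDFReal μ v x)).const_mul (v : ℝ)).congr_deriv
      (by field_simp [NNReal.coe_ne_zero.mpr hv]; ring)
  have hφ : Continuous φ :=
    continuous_iff_continuousAt.2 fun x => (hasDerivAt_gaussianPDFReal μ v x).continuousAt
  have hgφ : Integrable fun x => g x * φ x :=
    (hg.continuous.mul hφ).integrable_of_integrable_sub_mul μ
      (hcg.congr (ae_of_all _ fun x => by ring))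
  have hzero := integral_eq_zero_of_hasDerivAt_of_integrable hderiv
    ((hg'.const_mul v).sub hcg) (hgφ.const_mul v)
  rw [integral_sub (hg'.const_mul v) hcg, integral_const_mul, sub_eq_zero] at hzero
  simpa only [integral_gaussianReal_eq_integral_smul hv, smul_eq_mul] using hzero

end ProbabilityTheory

lemma MeasureTheory.integral_mul_condExp_of_aestronglyMeasurable {Ω : Type*}
    {m m₀ : MeasurableSpace Ω} {μ : Measure Ω} (hm : m ≤ m₀) [SigmaFinite (μ.trim hm)]
    {f g : Ω → ℝ} (hf : AEStronglyMeasurable[m] f μ) (hfg : Integrable (f * g) μ)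
    (hg : Integrable g μ) :
    ∫ ω, f ω * μ[g|m] ω ∂μ = ∫ ω, f ω * g ω ∂μ := calc
  _ = ∫ ω, μ[f * g|m] ω ∂μ :=
    integral_congr_ae (condExp_mul_of_aestronglyMeasurable_left hf hfg hg).symm
  _ = ∫ ω, f ω * g ω ∂μ := integral_condExp hm

theorem liquid_association_eq_triple_moment_general
    {Ω : Type*} [MeasurableSpace Ω] (P : Measure Ω) [IsProbabilityMeasure P]
    (X Y Z : Ω → ℝ) (hZ : Measurable Z)
    (hlawZ : P.map Z = gaussianReal 0 1)
    (hXY : Integrable (fun ω => X ω * Y ω) P)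
    (hXYZ : Integrable (fun ω => X ω * Y ω * Z ω) P)
    (g : ℝ → ℝ) (hg : Differentiable ℝ g)
    (hcond : (fun ω => g (Z ω)) =ᵐ[P]
      P[fun ω => X ω * Y ω | MeasurableSpace.comap Z inferInstance])
    (hg' : Integrable (fun ω => deriv g (Z ω)) P)
    (hzg : Integrable (fun z => z * g z) (P.map Z)) :
    ∫ ω, deriv g (Z ω) ∂P = ∫ ω, X ω * Y ω * Z ω ∂P := by
  have hg'_meas : AEStronglyMeasurable (deriv g) (P.map Z) :=
    (measurable_deriv g).aestronglyMeasurable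
  have hstein := var_mul_integral_deriv_gaussianReal one_ne_zero hg
    (hlawZ ▸ (integrable_map_measure hg'_meas hZ.aemeasurable).mpr hg') (by simpa [hlawZ] using hzg)
  calc ∫ ω, deriv g (Z ω) ∂P = ∫ x, deriv g x ∂gaussianReal 0 1 := by
        rw [← hlawZ, integral_map hZ.aemeasurable hg'_meas]
    _ = ∫ x, x * g x ∂gaussianReal 0 1 := by simpa using hstein
    _ = ∫ ω, Z ω * g (Z ω) ∂P := by
        rw [← hlawZ, integral_map (f := fun x => x * g x) hZ.aemeasurable
          (continuous_id.mul hg.continuous).aestronglyMeasurable]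
    _ = ∫ ω, Z ω * P[fun ω => X ω * Y ω | MeasurableSpace.comap Z inferInstance] ω ∂P :=
        integral_congr_ae (hcond.mono fun ω h => congrArg (Z ω * ·) h)
    _ = ∫ ω, Z ω * (X ω * Y ω) ∂P :=
        integral_mul_condExp_of_aestronglyMeasurable hZ.comap_le
          (comap_measurable Z).aestronglyMeasurable
          (hXYZ.congr (ae_of_all _ fun ω => by simp only [Pi.mul_apply]; ring)) hXY
    _ = ∫ ω, X ω * Y ω * Z ω ∂P := by simp only [mul_comm]

/-- Liquid association equals the triple moment under normality: if `Z` has standard Gaussian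
law, `X*Y` and `X*Y*Z` are integrable, and `g` is a measurable differentiable function such that
`g ∘ Z` is a version of the conditional expectation `E[X*Y | σ(Z)]`, with `g' ∘ Z` integrable and
`z ↦ z * g z` integrable with respect to the law of `Z`, then `E[g'(Z)] = E[X*Y*Z]`. -/
theorem liquid_association_eq_triple_moment
    {Ω : Type*} [MeasurableSpace Ω] (P : Measure Ω) [IsProbabilityMeasure P]
    (X Y Z : Ω → ℝ) (hX : Measurable X) (hY : Measurable Y) (hZ : Measurable Z)
    (hlawZ : P.map Z = gaussianReal 0 1)
    (hXY : Integrable (fun ω => X ω * Y ω) P)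
    (hXYZ : Integrable (fun ω => X ω * Y ω * Z ω) P)
    (g : ℝ → ℝ) (hgm : Measurable g) (hg : Differentiable ℝ g)
    (hcond : (fun ω => g (Z ω)) =ᵐ[P]
      P[fun ω => X ω * Y ω | MeasurableSpace.comap Z inferInstance])
    (hg' : Integrable (fun ω => deriv g (Z ω)) P)
    (hzg : Integrable (fun z => z * g z) (P.map Z)) :
    ∫ ω, deriv g (Z ω) ∂P = ∫ ω, X ω * Y ω * Z ω ∂P :=
  liquid_association_eq_triple_moment_general P X Y Z hZ hlawZ hXY hXYZ g hg hcond hg' hzg
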